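/- arXiv:2203.08857 — 3 statements merged into one kernel-verified Lean document; each statement's English description precedes it below -/
import Mathlib

section
/- For every real x ≥ 2, the Gamma function satisfies Γ(x) ≤ (x/2)^{x−1}. -/
/-!
Let `L y = log Γ(y) - (y - 1) log (y / 2)`. By Gauss's product formula `L` is the pointwise limit
on `(0, ∞)` of `log (n! n^y / (y (y + 1) ⋯ (y + n))) - (y - 1) log (y / 2)`, which is an affine
function of `y` minus `y log y + ∑_{m=1}^n log (y + m)`. The latter is convex, since its second
derivative `1/y - ∑_{m=1}^n (y + m)⁻²` is nonnegative by telescoping against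
`(y + m - 1)⁻¹ - (y + m)⁻¹`. Hence `L` is concave. Now `L 2 = 0` and
`L (3/2) = log (√π / 2) - ½ log (3/4) ≥ 0` because `π ≥ 3`, so concavity gives `L x ≤ L 2 = 0`
for all `x ≥ 2`.
-/

open Real Set Filter Topology

theorem concaveOn_of_tendsto {ι E : Type*} [AddCommMonoid E] [Module ℝ E] {l : Filter ι}
    [l.NeBot] {s : Set E} {f : ι → E → ℝ} {g : E → ℝ} (hf : ∀ᶠ i in l, ConcaveOn ℝ s (f i))
    (hs : Convex ℝ s) (hg : ∀ x ∈ s, Tendsto (fun i => f i x) l (𝓝 (g x))) :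
    ConcaveOn ℝ s g := by
  refine ⟨hs, fun x hx y hy a b ha hb hab => ?_⟩
  refine le_of_tendsto_of_tendsto (((hg x hx).const_mul a).add ((hg y hy).const_mul b))
    (hg _ (hs hx hy ha hb hab)) ?_
  filter_upwards [hf] with i hi using hi.2 hx hy ha hb hab

theorem sum_inv_add_succ_sq_le_inv {y : ℝ} (hy : 0 < y) (n : ℕ) :
    ∑ m ∈ Finset.range n, ((y + (m + 1)) ^ 2)⁻¹ ≤ y⁻¹ := by
  calc ∑ m ∈ Finset.range n, ((y + (m + 1)) ^ 2)⁻¹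
      ≤ ∑ m ∈ Finset.range n, ((y + m)⁻¹ - (y + (m + 1))⁻¹) := by
        gcongr with m
        have : 0 < y + m := by positivity
        rw [inv_sub_inv this.ne' (by positivity), add_sub_add_left_eq_sub, add_sub_cancel_left,
          one_div]
        gcongr
        nlinarith
    _ = y⁻¹ - (y + n)⁻¹ := by
        simpa using Finset.sum_range_sub' (fun m : ℕ => (y + m)⁻¹) n
    _ ≤ y⁻¹ := sub_le_self _ (by positivity)

theorem convexOn_mul_log_add_sum_log_add_succ (n : ℕ) :
    ConvexOn ℝ (Ioi 0) fun y => y * log y + ∑ m ∈ Finset.range n, log (y + (m + 1)) := by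
  have hderiv {y : ℝ} (hy : 0 < y) :
      HasDerivAt (fun y => y * log y + ∑ m ∈ Finset.range n, log (y + (m + 1)))
        (log y + 1 + ∑ m ∈ Finset.range n, (y + (m + 1))⁻¹) y := by
    refine (hasDerivAt_mul_log hy.ne').add (HasDerivAt.fun_sum fun m _ => ?_)
    simpa using ((hasDerivAt_id y).add_const _).log (by positivity)
  have hderiv2 {y : ℝ} (hy : 0 < y) :
      HasDerivAt (fun y => log y + 1 + ∑ m ∈ Finset.range n, (y + (m + 1))⁻¹)
        (y⁻¹ - ∑ m ∈ Finset.range n, ((y + (m + 1)) ^ 2)⁻¹) y := by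
    rw [sub_eq_add_neg, ← Finset.sum_neg_distrib]
    refine ((hasDerivAt_log hy.ne').add_const 1).add (HasDerivAt.fun_sum fun m _ => ?_)
    simpa [neg_div] using ((hasDerivAt_id y).add_const ((m : ℝ) + 1)).fun_inv (by positivity)
  have hpos {y : ℝ} (hy : y ∈ interior (Ioi 0)) : 0 < y := by rwa [interior_Ioi] at hy
  exact convexOn_of_hasDerivWithinAt2_nonneg (convex_Ioi 0)
    (fun y hy => (hderiv hy).continuousAt.continuousWithinAt)
    (fun y hy => (hderiv (hpos hy)).hasDerivWithinAt)
    (fun y hy => (hderiv2 (hpos hy)).hasDerivWithinAt)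
    fun y hy => sub_nonneg.2 (sum_inv_add_succ_sq_le_inv (hpos hy) n)

theorem logGammaSeq_sub_mul_log_half_eq (n : ℕ) {y : ℝ} (hy : 0 < y) :
    BohrMollerup.logGammaSeq y n - (y - 1) * log (y / 2) =
      y * (log n + log 2) + (log n.factorial - log 2) -
        (y * log y + ∑ m ∈ Finset.range n, log (y + (m + 1))) := by
  rw [BohrMollerup.logGammaSeq, Finset.sum_range_succ', Nat.cast_zero, add_zero,
    log_div hy.ne' two_ne_zero]
  push_cast
  ring

theorem concaveOn_logGammaSeq_sub_mul_log_half (n : ℕ) :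
    ConcaveOn ℝ (Ioi 0) fun y => BohrMollerup.logGammaSeq y n - (y - 1) * log (y / 2) := by
  refine ((((LinearMap.mulLeft ℝ (log n + log 2)).concaveOn (convex_Ioi 0)).add_const
    (log n.factorial - log 2)).sub (convexOn_mul_log_add_sum_log_add_succ n)).congr fun y hy => ?_
  rw [logGammaSeq_sub_mul_log_half_eq n hy, mul_comm y]
  rfl

theorem concaveOn_log_Gamma_sub_mul_log_half :
    ConcaveOn ℝ (Ioi 0) fun y => log (Gamma y) - (y - 1) * log (y / 2) :=
  concaveOn_of_tendsto (l := atTop) (Eventually.of_forall concaveOn_logGammaSeq_sub_mul_log_half)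
    (convex_Ioi 0) fun _ hy => (BohrMollerup.tendsto_log_gamma hy).sub_const _

theorem sqrt_three_div_four_le_Gamma_three_div_two : √(3 / 4) ≤ Gamma (3 / 2) := by
  have hΓ : Gamma (3 / 2) = √(π / 4) := by
    rw [show (3 / 2 : ℝ) = 1 / 2 + 1 by norm_num, Gamma_add_one (by norm_num), Gamma_one_half_eq,
      sqrt_div' _ (by norm_num : (0 : ℝ) ≤ 4), show (4 : ℝ) = 2 ^ 2 by norm_num,
      sqrt_sq (by norm_num)]
    ring
  rw [hΓ]
  gcongr
  exact pi_gt_three.le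

/-- For every real `x ≥ 2`, the Gamma function satisfies `Γ(x) ≤ (x/2)^(x-1)`. -/
theorem Gamma_le_half_pow (x : ℝ) (hx : 2 ≤ x) :
    Real.Gamma x ≤ (x / 2) ^ (x - 1) := by
  have hx0 : 0 < x := by linarith
  set L : ℝ → ℝ := fun y => log (Gamma y) - (y - 1) * log (y / 2)
  have hL2 : L 2 = 0 := by simp [L]
  have hL32 : 0 ≤ L (3 / 2) := by
    have := log_le_log (by positivity) sqrt_three_div_four_le_Gamma_three_div_two
    rw [log_sqrt (by norm_num)] at this
    norm_num [L]
    linarith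
  have hLx : L x ≤ L 2 := concaveOn_log_Gamma_sub_mul_log_half.right_le_of_le_left''
    (by norm_num : (3 / 2 : ℝ) ∈ Ioi 0) hx0 (by norm_num) hx (hL2.trans_le hL32)
  rw [← log_le_log_iff (Gamma_pos_of_pos hx0) (by positivity), log_rpow (by positivity)]
  linarith
end

section
/- Let M ∈ ℝ^{m×n} have rank r with compact SVD M = UΣVᵀ, and define P^⊥(A) = UUᵀA + AVVᵀ − UUᵀAVVᵀ and P(A) = A − P^⊥(A). Then for every matrix E ∈ ℝ^{m×n}, the nuclear norm satisfies ‖M + E‖_* ≥ ‖M‖_* + ‖P(E)‖_* − ‖P^⊥(E)‖_*. -/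
open Matrix

/-- The nuclear norm of a real matrix: `‖M‖_* = trace (√(MᴴM))`. -/
noncomputable def nuclearNorm {m n : ℕ} (M : Matrix (Fin m) (Fin n) ℝ) : ℝ :=
  ((Matrix.posSemidef_conjTranspose_mul_self M).1.eigenvectorUnitary.1 *
    diagonal ((RCLike.ofReal : ℝ → ℝ) ∘ Real.sqrt ∘
      (Matrix.posSemidef_conjTranspose_mul_self M).1.eigenvalues) *
    (star (Matrix.posSemidef_conjTranspose_mul_self M).1.eigenvectorUnitary :
      Matrix (Fin n) (Fin n) ℝ)).trace

/-
Because `P(E)` has column space orthogonal to that of `U` and row space orthogonal to that of `V`,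
the square roots of `MᵀM` and `P(E)ᵀP(E)` multiply to zero, so `√((M + P(E))ᵀ(M + P(E)))` is their
sum and `‖M + P(E)‖_* = ‖M‖_* + ‖P(E)‖_*`. Since `M + P(E) = (M + E) - P^⊥(E)`, the triangle
inequality finishes the proof. The triangle inequality itself comes from the variational formula
`‖A‖_* = max ∑ⱼ ⟪uⱼ, A wⱼ⟫` over pairs of orthonormal families `u, w`, the maximum being attained
at the singular vectors of `A`.
-/

open scoped MatrixOrder ComplexOrder InnerProductSpace

namespace Matrix

variable {n 𝕜 : Type*} [Fintype n] [DecidableEq n] [RCLike 𝕜]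

theorem sqrt_mul_sqrt_eq_zero_of_mul_eq_zero {X Y : Matrix n n 𝕜} (hX : 0 ≤ X) (hY : 0 ≤ Y)
    (h : X * Y = 0) : CFC.sqrt X * CFC.sqrt Y = 0 := by
  set s := CFC.sqrt X
  set t := CFC.sqrt Y
  have hs : sᴴ = s := (CFC.sqrt_nonneg X).isSelfAdjoint
  have ht : tᴴ = t := (CFC.sqrt_nonneg Y).isSelfAdjoint
  have hss : s * s = X := CFC.sqrt_mul_sqrt_self X hX
  have htt : t * t = Y := CFC.sqrt_mul_sqrt_self Y hY
  have htXt : t * X * t = 0 := by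
    rw [← conjTranspose_mul_self_eq_zero]
    calc (t * X * t)ᴴ * (t * X * t) = t * (X * (t * t)) * X * t := by
          rw [conjTranspose_mul, conjTranspose_mul, ht, show Xᴴ = X from hX.isSelfAdjoint]
          noncomm_ring
      _ = 0 := by rw [htt, h]; simp
  rw [← conjTranspose_mul_self_eq_zero, conjTranspose_mul, hs, ht]
  calc t * s * (s * t) = t * (s * s) * t := by noncomm_ring
    _ = 0 := by rw [hss, htXt]

theorem sqrt_add_of_mul_eq_zero {X Y : Matrix n n 𝕜} (hX : 0 ≤ X) (hY : 0 ≤ Y)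
    (h : X * Y = 0) : CFC.sqrt (X + Y) = CFC.sqrt X + CFC.sqrt Y := by
  have hst := sqrt_mul_sqrt_eq_zero_of_mul_eq_zero hX hY h
  have hts : CFC.sqrt Y * CFC.sqrt X = 0 := by
    simpa [(CFC.sqrt_nonneg X).isSelfAdjoint.star_eq, (CFC.sqrt_nonneg Y).isSelfAdjoint.star_eq]
      using congrArg star hst
  refine CFC.sqrt_unique ?_ (add_nonneg (CFC.sqrt_nonneg X) (CFC.sqrt_nonneg Y))
  rw [add_mul, mul_add, mul_add, hst, hts, CFC.sqrt_mul_sqrt_self X hX,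
    CFC.sqrt_mul_sqrt_self Y hY, add_zero, zero_add]

end Matrix

theorem nuclearNorm_eq_trace_sqrt {m n : ℕ} (A : Matrix (Fin m) (Fin n) ℝ) :
    nuclearNorm A = (CFC.sqrt (Aᴴ * A)).trace := by
  have hA := posSemidef_conjTranspose_mul_self A
  rw [CFC.sqrt_eq_real_sqrt _ hA.nonneg, cfcₙ_eq_cfc, hA.1.cfc_eq]
  rfl

theorem nuclearNorm_neg {m n : ℕ} (A : Matrix (Fin m) (Fin n) ℝ) :
    nuclearNorm (-A) = nuclearNorm A := by
  simp only [nuclearNorm_eq_trace_sqrt, conjTranspose_neg, Matrix.neg_mul, Matrix.mul_neg, neg_neg]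

theorem nuclearNorm_add_eq_of_conjTranspose_mul_eq_zero {m n : ℕ}
    {A B : Matrix (Fin m) (Fin n) ℝ} (h₁ : Aᴴ * B = 0) (h₂ : A * Bᴴ = 0) :
    nuclearNorm (A + B) = nuclearNorm A + nuclearNorm B := by
  have h₁' : Bᴴ * A = 0 := by
    rw [← conjTranspose_conjTranspose A, ← conjTranspose_mul, h₁, conjTranspose_zero]
  have hsum : (A + B)ᴴ * (A + B) = Aᴴ * A + Bᴴ * B := by
    rw [conjTranspose_add, Matrix.add_mul, Matrix.mul_add, Matrix.mul_add, h₁, h₁', add_zero,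
      zero_add]
  have hprod : Aᴴ * A * (Bᴴ * B) = 0 := by
    rw [Matrix.mul_assoc, ← Matrix.mul_assoc A, h₂, Matrix.zero_mul, Matrix.mul_zero]
  rw [nuclearNorm_eq_trace_sqrt, nuclearNorm_eq_trace_sqrt, nuclearNorm_eq_trace_sqrt, hsum,
    sqrt_add_of_mul_eq_zero (posSemidef_conjTranspose_mul_self A).nonneg
      (posSemidef_conjTranspose_mul_self B).nonneg hprod, trace_add]

theorem Orthonormal.sqrt_sum_inner_sq_le {ι E : Type*} [Fintype ι] [NormedAddCommGroup E]
    [InnerProductSpace ℝ E] {v : ι → E} (hv : Orthonormal ℝ v) (x : E) :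
    √(∑ i, ⟪v i, x⟫_ℝ ^ 2) ≤ ‖x‖ := by
  have h := hv.sum_inner_products_le (s := Finset.univ) (x := x)
  simp only [Real.norm_eq_abs, sq_abs] at h
  exact (Real.sqrt_le_sqrt h).trans_eq (Real.sqrt_sq (norm_nonneg x))

namespace Matrix

variable {m n : ℕ} (A : Matrix (Fin m) (Fin n) ℝ)

theorem inner_toEuclideanLin_eigenvectorBasis (i j : Fin n) :
    ⟪A.toEuclideanLin ((isHermitian_conjTranspose_mul_self A).eigenvectorBasis i),
        A.toEuclideanLin ((isHermitian_conjTranspose_mul_self A).eigenvectorBasis j)⟫_ℝ =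
      if i = j then (isHermitian_conjTranspose_mul_self A).eigenvalues j else 0 := by
  set hH := isHermitian_conjTranspose_mul_self A
  have heig : Aᴴ.toEuclideanLin (A.toEuclideanLin (hH.eigenvectorBasis j)) =
      hH.eigenvalues j • hH.eigenvectorBasis j := by
    show WithLp.toLp 2 (Aᴴ *ᵥ (A *ᵥ (hH.eigenvectorBasis j).ofLp)) = _
    rw [mulVec_mulVec, hH.mulVec_eigenvectorBasis]
    rfl
  rw [← LinearMap.adjoint_inner_right, ← toEuclideanLin_conjTranspose_eq_adjoint, heig,
    real_inner_smul_right, orthonormal_iff_ite.mp hH.eigenvectorBasis.orthonormal]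
  simp

theorem norm_toEuclideanLin_eigenvectorBasis (i : Fin n) :
    ‖A.toEuclideanLin ((isHermitian_conjTranspose_mul_self A).eigenvectorBasis i)‖ =
      √((isHermitian_conjTranspose_mul_self A).eigenvalues i) := by
  rw [norm_eq_sqrt_real_inner, inner_toEuclideanLin_eigenvectorBasis, if_pos rfl]

end Matrix

theorem nuclearNorm_eq_sum_sqrt_eigenvalues {m n : ℕ} (A : Matrix (Fin m) (Fin n) ℝ) :
    nuclearNorm A = ∑ i, √((isHermitian_conjTranspose_mul_self A).eigenvalues i) := by
  rw [nuclearNorm, trace_mul_cycle, Unitary.coe_star_mul_self, one_mul, trace_diagonal]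
  rfl

theorem sum_inner_toEuclideanLin_le_nuclearNorm {m n : ℕ} (A : Matrix (Fin m) (Fin n) ℝ)
    {ι : Type*} [Fintype ι] {u : ι → EuclideanSpace ℝ (Fin m)}
    {w : ι → EuclideanSpace ℝ (Fin n)} (hu : Orthonormal ℝ u) (hw : Orthonormal ℝ w) :
    ∑ j, ⟪u j, A.toEuclideanLin (w j)⟫_ℝ ≤ nuclearNorm A := by
  set b := (isHermitian_conjTranspose_mul_self A).eigenvectorBasis
  have hexpand : ∀ j, ⟪u j, A.toEuclideanLin (w j)⟫_ℝ =
      ∑ i, ⟪b i, w j⟫_ℝ * ⟪u j, A.toEuclideanLin (b i)⟫_ℝ := by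
    intro j
    conv_lhs => rw [← b.sum_repr' (w j)]
    simp only [map_sum, map_smul, inner_sum, real_inner_smul_right]
  rw [nuclearNorm_eq_sum_sqrt_eigenvalues, Finset.sum_congr rfl fun j _ => hexpand j,
    Finset.sum_comm]
  refine Finset.sum_le_sum fun i _ => ?_
  calc ∑ j, ⟪b i, w j⟫_ℝ * ⟪u j, A.toEuclideanLin (b i)⟫_ℝ
      ≤ √(∑ j, ⟪w j, b i⟫_ℝ ^ 2) * √(∑ j, ⟪u j, A.toEuclideanLin (b i)⟫_ℝ ^ 2) := by
        simpa only [real_inner_comm (b i)] using Real.sum_mul_le_sqrt_mul_sqrt _ _ _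
    _ ≤ ‖b i‖ * ‖A.toEuclideanLin (b i)‖ := by
        gcongr
        exacts [hw.sqrt_sum_inner_sq_le _, hu.sqrt_sum_inner_sq_le _]
    _ = √((isHermitian_conjTranspose_mul_self A).eigenvalues i) := by
        rw [b.norm_eq_one, one_mul, norm_toEuclideanLin_eigenvectorBasis]

theorem exists_orthonormal_sum_inner_toEuclideanLin_eq_nuclearNorm {m n : ℕ}
    (A : Matrix (Fin m) (Fin n) ℝ) :
    ∃ (ι : Type) (_ : Fintype ι) (u : ι → EuclideanSpace ℝ (Fin m))
      (w : ι → EuclideanSpace ℝ (Fin n)), Orthonormal ℝ u ∧ Orthonormal ℝ w ∧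
        ∑ j, ⟪u j, A.toEuclideanLin (w j)⟫_ℝ = nuclearNorm A := by
  have hAb := inner_toEuclideanLin_eigenvectorBasis A
  have hμ := (posSemidef_conjTranspose_mul_self A).eigenvalues_nonneg
  rw [nuclearNorm_eq_sum_sqrt_eigenvalues]
  set μ := (isHermitian_conjTranspose_mul_self A).eigenvalues
  set b := (isHermitian_conjTranspose_mul_self A).eigenvectorBasis
  have hsqrt : ∀ i : {i // μ i ≠ 0}, √(μ i) ≠ 0 := fun i =>
    Real.sqrt_ne_zero'.mpr ((hμ i).lt_of_ne' i.2)
  -- the left singular vectors, which exist only for the nonzero singular values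
  let u : {i // μ i ≠ 0} → EuclideanSpace ℝ (Fin m) :=
    fun i => (√(μ i))⁻¹ • A.toEuclideanLin (b i)
  have hu : ∀ i j : {i // μ i ≠ 0},
      ⟪u i, A.toEuclideanLin (b j)⟫_ℝ = if i = j then √(μ j) else 0 := by
    intro i j
    simp only [u, real_inner_smul_left, hAb, Subtype.ext_iff]
    split_ifs with h
    · rw [h, inv_mul_eq_iff_eq_mul₀ (hsqrt j), Real.mul_self_sqrt (hμ j)]
    · rw [mul_zero]
  refine ⟨_, inferInstance, u, fun i => b i, ?_, b.orthonormal.comp _ Subtype.val_injective, ?_⟩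
  · refine orthonormal_iff_ite.mpr fun i j => ?_
    rw [real_inner_smul_right, hu]
    split_ifs
    · exact inv_mul_cancel₀ (hsqrt j)
    · rw [mul_zero]
  · simp only [hu, if_true]
    rw [← Fintype.sum_subtype_add_sum_subtype (fun i => μ i ≠ 0), left_eq_add]
    exact Finset.sum_eq_zero fun i _ => by rw [not_not.mp i.2, Real.sqrt_zero]

theorem nuclearNorm_add_le {m n : ℕ} (A B : Matrix (Fin m) (Fin n) ℝ) :
    nuclearNorm (A + B) ≤ nuclearNorm A + nuclearNorm B := by
  obtain ⟨ι, _, u, w, hu, hw, h⟩ :=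
    exists_orthonormal_sum_inner_toEuclideanLin_eq_nuclearNorm (A + B)
  rw [← h]
  simp only [map_add, LinearMap.add_apply, inner_add_right, Finset.sum_add_distrib]
  exact add_le_add (sum_inner_toEuclideanLin_le_nuclearNorm A hu hw)
    (sum_inner_toEuclideanLin_le_nuclearNorm B hu hw)

theorem nuclearNorm_mul_mul_transpose_add {m n r : ℕ} {U : Matrix (Fin m) (Fin r) ℝ}
    {V : Matrix (Fin n) (Fin r) ℝ} (S : Matrix (Fin r) (Fin r) ℝ) {X : Matrix (Fin m) (Fin n) ℝ}
    (hUX : Uᵀ * X = 0) (hXV : X * V = 0) :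
    nuclearNorm (U * S * Vᵀ + X) = nuclearNorm (U * S * Vᵀ) + nuclearNorm X := by
  refine nuclearNorm_add_eq_of_conjTranspose_mul_eq_zero ?_ ?_
  · simp only [conjTranspose_eq_transpose_of_trivial, transpose_mul, transpose_transpose,
      Matrix.mul_assoc, hUX, Matrix.mul_zero]
  · rw [conjTranspose_eq_transpose_of_trivial, Matrix.mul_assoc, ← transpose_mul, hXV,
      transpose_zero, Matrix.mul_zero]

theorem nuclearNorm_add_ge_proj_general (m n r : ℕ)
    (M : Matrix (Fin m) (Fin n) ℝ)
    (U : Matrix (Fin m) (Fin r) ℝ) (V : Matrix (Fin n) (Fin r) ℝ)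
    (S : Matrix (Fin r) (Fin r) ℝ)
    (hU : Uᵀ * U = 1) (hV : Vᵀ * V = 1)
    (hM : M = U * S * Vᵀ)
    (E : Matrix (Fin m) (Fin n) ℝ) :
    nuclearNorm M
      + nuclearNorm (E - (U * Uᵀ * E + E * (V * Vᵀ) - U * Uᵀ * E * (V * Vᵀ)))
      - nuclearNorm (U * Uᵀ * E + E * (V * Vᵀ) - U * Uᵀ * E * (V * Vᵀ))
      ≤ nuclearNorm (M + E) := by
  set Pperp := U * Uᵀ * E + E * (V * Vᵀ) - U * Uᵀ * E * (V * Vᵀ)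
  have hUP : Uᵀ * (E - Pperp) = 0 := by
    simp only [Pperp, Matrix.mul_sub, Matrix.mul_add, ← Matrix.mul_assoc, hU, Matrix.one_mul]
    abel
  have hPV : (E - Pperp) * V = 0 := by
    simp only [Pperp, Matrix.sub_mul, Matrix.add_mul, Matrix.mul_assoc, hV, Matrix.mul_one]
    abel
  have hsplit : nuclearNorm (M + (E - Pperp)) = nuclearNorm M + nuclearNorm (E - Pperp) := by
    rw [hM]; exact nuclearNorm_mul_mul_transpose_add S hUP hPV
  have htriangle := nuclearNorm_add_le (M + E) (-Pperp)
  rw [nuclearNorm_neg, show M + E + -Pperp = M + (E - Pperp) by abel, hsplit] at htriangle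
  linarith

/-- For `M = UΣVᵀ` with orthonormal `U, V`, and the projections
`P^⊥(E) = UUᵀE + EVVᵀ − UUᵀEVVᵀ`, `P(E) = E − P^⊥(E)`, one has
`‖M + E‖_* ≥ ‖M‖_* + ‖P(E)‖_* − ‖P^⊥(E)‖_*`. -/
theorem nuclearNorm_add_ge_proj (m n r : ℕ)
    (M : Matrix (Fin m) (Fin n) ℝ)
    (U : Matrix (Fin m) (Fin r) ℝ) (V : Matrix (Fin n) (Fin r) ℝ)
    (S : Matrix (Fin r) (Fin r) ℝ) (hS : S.IsDiag)
    (hU : Uᵀ * U = 1) (hV : Vᵀ * V = 1)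
    (hM : M = U * S * Vᵀ) (hrank : M.rank = r)
    (E : Matrix (Fin m) (Fin n) ℝ) :
    nuclearNorm M
      + nuclearNorm (E - (U * Uᵀ * E + E * (V * Vᵀ) - U * Uᵀ * E * (V * Vᵀ)))
      - nuclearNorm (U * Uᵀ * E + E * (V * Vᵀ) - U * Uᵀ * E * (V * Vᵀ))
      ≤ nuclearNorm (M + E) :=
  nuclearNorm_add_ge_proj_general m n r M U V S hU hV hM E
end

section
/- Let f₁, …, f_K : ℝ^D → ℝ be norms on ℝ^D with dual norms f₁^*, …, f_K^*, and let α₁, …, α_K > 0. Define the norm N(x) = Σ_{k=1}^K α_k f_k(x). Then the dual norm of N is N^*(y) = inf { max_{1≤k≤K} α_k^{−1} f_k^*(y_k) : y₁ + ⋯ + y_K = y }. -/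
open scoped BigOperators

/-- The dual norm (w.r.t. the Euclidean inner product) of a norm `f` on `ℝ^D`. -/
noncomputable def dualNorm {D : ℕ} (f : EuclideanSpace ℝ (Fin D) → ℝ)
    (y : EuclideanSpace ℝ (Fin D)) : ℝ :=
  sSup {t : ℝ | ∃ x, f x ≤ 1 ∧ t = inner ℝ y x}

/-!
Hölder's inequality `⟪y_k, x⟫ ≤ f_k^*(y_k) f_k(x)`, summed over `k`, bounds `N^*(y)` by every
`max_k α_k⁻¹ f_k^*(y_k)` with `Σ_k y_k = y`. Conversely, let `t = N^*(y)`. The set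
`C = Σ_k {z | f_k^*(z) ≤ α_k t}` is convex and compact (in finite dimension each `f_k` is
equivalent to the Euclidean norm). If `y ∉ C`, a functional `⟪v, ·⟫` separating `y` from `C`
is defeated on `C` itself: Hahn–Banach gives `z_k` with `f_k^*(z_k) ≤ 1` and
`⟪z_k, v⟫ = f_k(v)`, so `Σ_k α_k t z_k ∈ C` takes the value `t N(v) ≥ ⟪y, v⟫`. Hence `y ∈ C`,
i.e. some decomposition `y = Σ_k y_k` has `max_k α_k⁻¹ f_k^*(y_k) ≤ t`.
-/

open Set Finset Metric
open scoped InnerProductSpace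

namespace Seminorm

section FiniteDimensional

variable {E : Type*} [NormedAddCommGroup E] [NormedSpace ℝ E] [FiniteDimensional ℝ E]
  (p : Seminorm ℝ E)

protected theorem continuous_of_finiteDimensional : Continuous p :=
  continuousOn_univ.mp (p.convexOn.continuousOn isOpen_univ)

theorem exists_pos_mul_norm_le (hp : ∀ x, p x = 0 → x = 0) :
    ∃ c, 0 < c ∧ ∀ x, c * ‖x‖ ≤ p x := by
  rcases subsingleton_or_nontrivial E with hE | hE
  · exact ⟨1, one_pos, fun x => by simp [Subsingleton.elim x 0]⟩
  obtain ⟨x₀, hx₀, hmin⟩ := (isCompact_sphere (0 : E) 1).exists_isMinOn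
    (NormedSpace.sphere_nonempty.mpr zero_le_one) p.continuous_of_finiteDimensional.continuousOn
  have hx₀_ne : x₀ ≠ 0 := ne_zero_of_mem_unit_sphere ⟨x₀, hx₀⟩
  refine ⟨p x₀, (apply_nonneg p x₀).lt_of_ne fun h => hx₀_ne (hp x₀ h.symm), fun x => ?_⟩
  rcases eq_or_ne x 0 with rfl | hx
  · simp
  have hxn : 0 < ‖x‖ := norm_pos_iff.mpr hx
  have hu : ‖x‖⁻¹ • x ∈ sphere (0 : E) 1 := by
    simp [norm_smul, inv_mul_cancel₀ hxn.ne']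
  have h : p x₀ ≤ p (‖x‖⁻¹ • x) := hmin hu
  rwa [map_smul_eq_mul, norm_inv, norm_norm, ← div_eq_inv_mul, le_div_iff₀ hxn] at h

end FiniteDimensional

theorem exists_inner_le_eq {E : Type*} [NormedAddCommGroup E] [InnerProductSpace ℝ E]
    [FiniteDimensional ℝ E] (p : Seminorm ℝ E) (v : E) :
    ∃ z : E, (∀ x, ⟪z, x⟫_ℝ ≤ p x) ∧ ⟪z, v⟫_ℝ = p v := by
  let φ : E →ₗ.[ℝ] ℝ := LinearPMap.mkSpanSingleton' v (p v) fun c hc => by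
    rcases smul_eq_zero.mp hc with rfl | rfl <;> simp
  obtain ⟨g, hgφ, hgp⟩ := exists_extension_of_le_sublinear φ p
    (fun c hc x => by rw [map_smul_eq_mul, Real.norm_of_nonneg hc.le]) (map_add_le_add p)
    (by
      rintro ⟨x, hx⟩
      obtain ⟨c, rfl⟩ := Submodule.mem_span_singleton.mp hx
      rw [LinearPMap.mkSpanSingleton'_apply, smul_eq_mul, map_smul_eq_mul, Real.norm_eq_abs]
      exact mul_le_mul_of_nonneg_right (le_abs_self c) (apply_nonneg p v))
  refine ⟨(InnerProductSpace.toDual ℝ E).symm (LinearMap.toContinuousLinearMap g),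
    fun x => ?_, ?_⟩
  · rw [InnerProductSpace.toDual_symm_apply]; exact hgp x
  · rw [InnerProductSpace.toDual_symm_apply, LinearMap.coe_toContinuousLinearMap',
      hgφ ⟨v, Submodule.mem_span_singleton_self v⟩]
    exact LinearPMap.mkSpanSingleton'_apply_self _ _ _ _

end Seminorm

section DualNorm

variable {D : ℕ} (p : Seminorm ℝ (EuclideanSpace ℝ (Fin D)))

theorem dualNorm_le_of_inner_le {y : EuclideanSpace ℝ (Fin D)} {r : ℝ} (hr : 0 ≤ r)
    (h : ∀ x, ⟪y, x⟫_ℝ ≤ r * p x) : dualNorm p y ≤ r :=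
  csSup_le ⟨0, 0, by simp, by simp⟩ fun _ ⟨x, hx, ht⟩ =>
    ht ▸ (h x).trans (mul_le_of_le_one_right hr hx)

variable {p} (hp : ∀ x, p x = 0 → x = 0)
include hp

theorem bddAbove_inner_of_le_one (y : EuclideanSpace ℝ (Fin D)) :
    BddAbove {t : ℝ | ∃ x, p x ≤ 1 ∧ t = ⟪y, x⟫_ℝ} := by
  obtain ⟨c, hc, hcp⟩ := p.exists_pos_mul_norm_le hp
  refine ⟨‖y‖ * (1 / c), ?_⟩
  rintro _ ⟨x, hx, rfl⟩
  have hxc : ‖x‖ ≤ 1 / c := (le_div_iff₀' hc).2 ((hcp x).trans hx)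
  exact (real_inner_le_norm y x).trans (by gcongr)

theorem inner_le_dualNorm {y x : EuclideanSpace ℝ (Fin D)} (hx : p x ≤ 1) :
    ⟪y, x⟫_ℝ ≤ dualNorm p y :=
  le_csSup (bddAbove_inner_of_le_one hp y) ⟨x, hx, rfl⟩

theorem dualNorm_nonneg (y : EuclideanSpace ℝ (Fin D)) : 0 ≤ dualNorm p y := by
  simpa using inner_le_dualNorm hp (y := y) (x := 0) (by simp)

theorem inner_le_dualNorm_mul (y x : EuclideanSpace ℝ (Fin D)) :
    ⟪y, x⟫_ℝ ≤ dualNorm p y * p x := by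
  rcases (apply_nonneg p x).eq_or_lt with h | h
  · simp [hp x h.symm]
  have hx : p ((p x)⁻¹ • x) ≤ 1 := by
    rw [map_smul_eq_mul, Real.norm_of_nonneg (inv_nonneg.2 h.le), inv_mul_cancel₀ h.ne']
  have := inner_le_dualNorm hp (y := y) hx
  rwa [real_inner_smul_right, inv_mul_le_iff₀ h, mul_comm] at this

theorem setOf_dualNorm_le_eq_iInter (r : ℝ) :
    {z : EuclideanSpace ℝ (Fin D) | dualNorm p z ≤ r} =
      ⋂ x ∈ {x | p x ≤ 1}, {z | ⟪z, x⟫_ℝ ≤ r} := by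
  ext z
  simp only [mem_ofPred_eq, mem_iInter]
  refine ⟨fun hz x hx => (inner_le_dualNorm hp hx).trans hz, fun h => ?_⟩
  exact csSup_le ⟨0, 0, by simp, by simp⟩ fun _ ⟨x, hx, ht⟩ => ht ▸ h x hx

theorem convex_setOf_dualNorm_le (r : ℝ) :
    Convex ℝ {z : EuclideanSpace ℝ (Fin D) | dualNorm p z ≤ r} := by
  rw [setOf_dualNorm_le_eq_iInter hp]
  exact convex_iInter₂ fun x _ => convex_halfSpace_le
    ⟨fun a b => inner_add_left a b x, fun c a => real_inner_smul_left a x c⟩ r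

theorem isCompact_setOf_dualNorm_le (r : ℝ) :
    IsCompact {z : EuclideanSpace ℝ (Fin D) | dualNorm p z ≤ r} := by
  obtain ⟨C, hC, hpC⟩ := p.bound_of_continuous_normedSpace p.continuous_of_finiteDimensional
  refine isCompact_of_isClosed_isBounded ?_
    (isBounded_iff_forall_norm_le.2 ⟨r * C, fun z hz => ?_⟩)
  · rw [setOf_dualNorm_le_eq_iInter hp]
    exact isClosed_biInter fun x _ => isClosed_le (continuous_id.inner continuous_const)
      continuous_const
  · have hr : 0 ≤ r := (dualNorm_nonneg hp z).trans hz
    have hzz : ‖z‖ ^ 2 ≤ r * C * ‖z‖ := calc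
      ‖z‖ ^ 2 = ⟪z, z⟫_ℝ := (real_inner_self_eq_norm_sq z).symm
      _ ≤ dualNorm p z * p z := inner_le_dualNorm_mul hp z z
      _ ≤ r * (C * ‖z‖) := mul_le_mul hz (hpC z) (apply_nonneg p z) hr
      _ = r * C * ‖z‖ := by ring
    nlinarith [norm_nonneg z, mul_nonneg hr hC.le]

end DualNorm

section WeightedSum

variable {D : ℕ} {ι : Type*} {p : ι → Seminorm ℝ (EuclideanSpace ℝ (Fin D))} {α : ι → ℝ}

theorem iSup_inv_mul_dualNorm_nonneg (hp : ∀ k x, p k x = 0 → x = 0) (hα : ∀ k, 0 ≤ α k)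
    (ys : ι → EuclideanSpace ℝ (Fin D)) : 0 ≤ ⨆ k, (α k)⁻¹ * dualNorm (p k) (ys k) :=
  Real.iSup_nonneg fun k => mul_nonneg (inv_nonneg.2 (hα k)) (dualNorm_nonneg (hp k) _)

variable [Fintype ι]

theorem dualNorm_le_iSup_of_sum_eq (hp : ∀ k x, p k x = 0 → x = 0) (hα : ∀ k, 0 < α k)
    {q : Seminorm ℝ (EuclideanSpace ℝ (Fin D))} (hq : ∀ x, q x = ∑ k, α k * p k x)
    {y : EuclideanSpace ℝ (Fin D)} {ys : ι → EuclideanSpace ℝ (Fin D)} (hys : ∑ k, ys k = y) :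
    dualNorm q y ≤ ⨆ k, (α k)⁻¹ * dualNorm (p k) (ys k) := by
  set M := ⨆ k, (α k)⁻¹ * dualNorm (p k) (ys k)
  have hM : ∀ k, dualNorm (p k) (ys k) ≤ α k * M := fun k =>
    (inv_mul_le_iff₀ (hα k)).1 <|
      le_ciSup (f := fun k => (α k)⁻¹ * dualNorm (p k) (ys k)) (Set.finite_range _).bddAbove k
  refine dualNorm_le_of_inner_le q (iSup_inv_mul_dualNorm_nonneg hp (fun k => (hα k).le) ys)
    fun x => ?_
  calc ⟪y, x⟫_ℝ = ∑ k, ⟪ys k, x⟫_ℝ := by rw [← hys, sum_inner]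
    _ ≤ ∑ k, dualNorm (p k) (ys k) * p k x :=
      sum_le_sum fun k _ => inner_le_dualNorm_mul (hp k) _ _
    _ ≤ ∑ k, α k * M * p k x := by gcongr with k; exact hM k
    _ = M * q x := by rw [hq, mul_sum]; exact sum_congr rfl fun k _ => by ring

theorem exists_sum_eq_forall_dualNorm_le (hp : ∀ k x, p k x = 0 → x = 0) (hα : ∀ k, 0 < α k)
    {q : Seminorm ℝ (EuclideanSpace ℝ (Fin D))} (hq : ∀ x, q x = ∑ k, α k * p k x)
    (hq_def : ∀ x, q x = 0 → x = 0) (y : EuclideanSpace ℝ (Fin D)) :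
    ∃ ys : ι → EuclideanSpace ℝ (Fin D), ∑ k, ys k = y ∧
      ∀ k, dualNorm (p k) (ys k) ≤ α k * dualNorm q y := by
  set t := dualNorm q y
  have ht : 0 ≤ t := dualNorm_nonneg hq_def y
  set C := (fun zs : ι → EuclideanSpace ℝ (Fin D) => ∑ k, zs k) ''
    univ.pi fun k => {z | dualNorm (p k) z ≤ α k * t}
  suffices hyC : y ∈ C by
    obtain ⟨ys, hys, rfl⟩ := hyC
    exact ⟨ys, rfl, fun k => hys k (mem_univ k)⟩
  have hC_compact : IsCompact C :=
    (isCompact_univ_pi fun k => isCompact_setOf_dualNorm_le (hp k) _).image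
      (continuous_finsetSum _ fun k _ => continuous_apply k)
  have hC_convex : Convex ℝ C :=
    (convex_pi fun k _ => convex_setOf_dualNorm_le (hp k) _).is_linear_image
      ⟨fun _ _ => sum_add_distrib, fun _ _ => by simp only [Pi.smul_apply, smul_sum]⟩
  by_contra hyC
  obtain ⟨G, u, hGC, hGy⟩ := geometric_hahn_banach_closed_point hC_convex hC_compact.isClosed hyC
  set v := (InnerProductSpace.toDual ℝ (EuclideanSpace ℝ (Fin D))).symm G
  have hG : ∀ x, G x = ⟪v, x⟫_ℝ := fun x => InnerProductSpace.toDual_symm_apply.symm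
  choose w hw_le hw_eq using fun k => (p k).exists_inner_le_eq v
  have hαt : ∀ k, 0 ≤ α k * t := fun k => mul_nonneg (hα k).le ht
  have hmem : ∑ k, (α k * t) • w k ∈ C := ⟨_, fun k _ => dualNorm_le_of_inner_le (p k) (hαt k)
    fun x => by rw [real_inner_smul_left]; exact mul_le_mul_of_nonneg_left (hw_le k x) (hαt k), rfl⟩
  have hG_mem : G (∑ k, (α k * t) • w k) = t * q v := by
    simp only [hG, inner_sum, real_inner_smul_right, hq, mul_sum]
    exact sum_congr rfl fun k _ => by rw [real_inner_comm (w k) v, hw_eq]; ring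
  have hG_y : G y ≤ t * q v := by
    rw [hG, real_inner_comm]; exact inner_le_dualNorm_mul hq_def y v
  linarith [hGC _ hmem]

theorem dualNorm_sum_mul_eq_sInf [Nonempty ι] (hp : ∀ k x, p k x = 0 → x = 0)
    (hα : ∀ k, 0 < α k) (y : EuclideanSpace ℝ (Fin D)) :
    dualNorm (fun x => ∑ k, α k * p k x) y =
      sInf {t : ℝ | ∃ ys : ι → EuclideanSpace ℝ (Fin D),
        ∑ k, ys k = y ∧ t = ⨆ k, (α k)⁻¹ * dualNorm (p k) (ys k)} := by
  set q : Seminorm ℝ (EuclideanSpace ℝ (Fin D)) := ∑ k, (α k).toNNReal • p k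
  have hq : ∀ x, q x = ∑ k, α k * p k x := fun x => by
    simp [q, NNReal.smul_def, Real.coe_toNNReal _ (hα _).le]
  have hq_def : ∀ x, q x = 0 → x = 0 := fun x hx => by
    obtain ⟨k⟩ := ‹Nonempty ι›
    rw [hq, sum_eq_zero_iff_of_nonneg fun k _ => mul_nonneg (hα k).le (apply_nonneg _ _)] at hx
    exact hp k x ((mul_eq_zero.1 (hx k (mem_univ k))).resolve_left (hα k).ne')
  rw [show (fun x => ∑ k, α k * p k x) = ⇑q from funext fun x => (hq x).symm]
  obtain ⟨ys, hys, hys_le⟩ := exists_sum_eq_forall_dualNorm_le hp hα hq hq_def y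
  have hbdd : BddBelow {t : ℝ | ∃ ys : ι → EuclideanSpace ℝ (Fin D),
      ∑ k, ys k = y ∧ t = ⨆ k, (α k)⁻¹ * dualNorm (p k) (ys k)} :=
    ⟨0, fun _ ⟨zs, _, ht⟩ => ht ▸ iSup_inv_mul_dualNorm_nonneg hp (fun k => (hα k).le) zs⟩
  refine le_antisymm (le_csInf ⟨_, ys, hys, rfl⟩ ?_) ((csInf_le hbdd ⟨ys, hys, rfl⟩).trans ?_)
  · rintro _ ⟨zs, hzs, rfl⟩
    exact dualNorm_le_iSup_of_sum_eq hp hα hq hzs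
  · exact ciSup_le fun k => (inv_mul_le_iff₀ (hα k)).2 (hys_le k)

end WeightedSum

/-- The dual norm of a weighted sum of norms `N(x) = Σ_k α_k f_k(x)` is the
infimal-max expression
`N^*(y) = inf { max_k α_k⁻¹ f_k^*(y_k) : y₁ + ⋯ + y_K = y }`. -/
theorem dualNorm_weighted_sum (D K : ℕ) (hK : 0 < K)
    (f : Fin K → (EuclideanSpace ℝ (Fin D) → ℝ))
    (htri : ∀ k, ∀ a b, f k (a + b) ≤ f k a + f k b)
    (hhom : ∀ k, ∀ (c : ℝ) a, f k (c • a) = |c| * f k a)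
    (hdef : ∀ k, ∀ a, f k a = 0 → a = 0)
    (α : Fin K → ℝ) (hα : ∀ k, 0 < α k)
    (y : EuclideanSpace ℝ (Fin D)) :
    dualNorm (fun x => ∑ k, α k * f k x) y =
      sInf {t : ℝ | ∃ ys : Fin K → EuclideanSpace ℝ (Fin D),
        (∑ k, ys k) = y ∧ t = ⨆ k, (α k)⁻¹ * dualNorm (f k) (ys k)} := by
  have : Nonempty (Fin K) := ⟨⟨0, hK⟩⟩
  exact dualNorm_sum_mul_eq_sInf
    (p := fun k => Seminorm.of (f k) (htri k) fun c a => by rw [hhom, Real.norm_eq_abs]) hdef hα y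
end
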